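/- Let (R, m) be a local ring and A a finite abelian group of order d such that d is invertible in R. Let R[A] be the group algebra with counit ε, comultiplication Δ, and antipode σ (λ ↦ λ^{-1} extended R-linearly). Let I ⊆ R[A] be an ideal with ε(I) = 0, σ(I) ⊆ I, and Δ(I) ⊆ I ⊗ R[A] + R[A] ⊗ I. If g, g' ∈ R[A] both satisfy ε(g) = ε(g') = 1, Δ(g) − g ⊗ g ∈ I ⊗ R[A] + R[A] ⊗ I, Δ(g') − g' ⊗ g' ∈ I ⊗ R[A] + R[A] ⊗ I, and g − g' ∈ m·R[A] + I, then g − g' ∈ I. In other words, the reduction map from R[A]/I to its fiber over the residue field is injective on group-like elements. -/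

import Mathlib

/-!
In `Q = R[A]/I`, the image of any `x` with `ε(x) = 1` that is group-like modulo
`I ⊗ R[A] + R[A] ⊗ I` satisfies `x^d = 1`: the Adams operations `ψⁿ` (linear extensions of
`λ ↦ λⁿ`) satisfy `ψⁿ⁺¹ = μ ∘ (ψⁿ ⊗ id) ∘ Δ`, hence preserve `I` and give `xⁿ ≡ ψⁿ(x)` modulo
`I`, while `ψᵈ = η ∘ ε`. Since `Q` is finite over the local ring `R`, `m·Q` lies in the
Jacobson radical of `Q`. If `v^d = 1` and `v ≡ 1` modulo the Jacobson radical, then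
`1 + v + ⋯ + v^{d-1} ≡ d` is a unit killing `v - 1`; applied to `v = u·u'^{d-1}` this gives
`u = u'`.
-/

open TensorProduct

/-- The counit of the group algebra `R[A]`: the sum of the coefficients (the `R`-linear
extension of `λ ↦ 1`). -/
noncomputable def groupAlgebraCounit (R A : Type*) [CommRing R] [AddCommGroup A]
    (x : AddMonoidAlgebra R A) : R :=
  x.coeff.sum fun _ r => r

/-- The comultiplication of the group algebra `R[A]`: the `R`-linear extension of
`λ ↦ λ ⊗ λ`. -/
noncomputable def groupAlgebraComul (R A : Type*) [CommRing R] [AddCommGroup A]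
    (x : AddMonoidAlgebra R A) :
    AddMonoidAlgebra R A ⊗[R] AddMonoidAlgebra R A :=
  x.coeff.sum fun a r =>
    r • (AddMonoidAlgebra.single a 1 ⊗ₜ[R] AddMonoidAlgebra.single a 1)

/-- The antipode of the group algebra `R[A]`: the `R`-linear extension of `λ ↦ λ⁻¹`. -/
noncomputable def groupAlgebraAntipode (R A : Type*) [CommRing R] [AddCommGroup A]
    (x : AddMonoidAlgebra R A) : AddMonoidAlgebra R A :=
  AddMonoidAlgebra.ofCoeff (Finsupp.mapDomain Neg.neg x.coeff)

/-- The `R`-submodule `I ⊗ R[A] + R[A] ⊗ I` of `R[A] ⊗_R R[A]`: the span of the simple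
tensors having one factor in `I`. -/
noncomputable def groupAlgebraMixedTensor (R A : Type*) [CommRing R] [AddCommGroup A]
    (I : Ideal (AddMonoidAlgebra R A)) :
    Submodule R (AddMonoidAlgebra R A ⊗[R] AddMonoidAlgebra R A) :=
  Submodule.span R
    ({t | ∃ a ∈ I, ∃ b, t = a ⊗ₜ[R] b} ∪ {t | ∃ a, ∃ b ∈ I, t = a ⊗ₜ[R] b})

section JacobsonRadical

variable {S : Type*} [CommRing S]

theorem eq_one_of_pow_eq_one_of_sub_one_mem_jacobson {n : ℕ} (hn : IsUnit (n : S)) {v : S}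
    (hv : v ^ n = 1) (hv1 : v - 1 ∈ (⊥ : Ideal S).jacobson) : v = 1 := by
  set J := (⊥ : Ideal S).jacobson
  have := isLocalHom_of_le_jacobson_bot J le_rfl
  have hmk : Ideal.Quotient.mk J v = 1 := by
    rwa [← map_one (Ideal.Quotient.mk J), Ideal.Quotient.eq]
  have hsum : IsUnit (∑ i ∈ Finset.range n, v ^ i) := by
    apply IsUnit.of_map (Ideal.Quotient.mk J)
    simpa [hmk] using hn.map (Ideal.Quotient.mk J)
  have hkill : (v - 1) * ∑ i ∈ Finset.range n, v ^ i = 0 := by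
    rw [mul_comm, geom_sum_mul, hv, sub_self]
  exact sub_eq_zero.mp (hsum.mul_left_eq_zero.mp hkill)

theorem eq_of_pow_eq_one_of_sub_mem_jacobson {n : ℕ} (hn : IsUnit (n : S)) {u u' : S}
    (hu : u ^ n = 1) (hu' : u' ^ n = 1) (huu' : u - u' ∈ (⊥ : Ideal S).jacobson) : u = u' := by
  cases n with
  | zero =>
    have := subsingleton_of_zero_eq_one (M₀ := S) (by simpa using hn)
    exact Subsingleton.elim u u'
  | succ k =>
    have hv : (u * u' ^ k) ^ (k + 1) = 1 := by
      rw [mul_pow, ← pow_mul, mul_comm k, pow_mul, hu', one_pow, hu, one_mul]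
    have hv1 : u * u' ^ k - 1 ∈ (⊥ : Ideal S).jacobson := by
      rw [← hu', pow_succ', ← sub_mul]
      exact Ideal.mul_mem_right _ _ huu'
    calc u = u * u' ^ k * u' := by rw [mul_assoc, ← pow_succ, hu', mul_one]
      _ = u' := by rw [eq_one_of_pow_eq_one_of_sub_one_mem_jacobson hn hv hv1, one_mul]

end JacobsonRadical

theorem IsLocalRing.map_maximalIdeal_le_jacobson_bot (R S : Type*) [CommRing R] [IsLocalRing R]
    [CommRing S] [Algebra R S] [Algebra.IsIntegral R S] :
    (maximalIdeal R).map (algebraMap R S) ≤ (⊥ : Ideal S).jacobson := by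
  refine le_sInf fun M ⟨_, hM⟩ => Ideal.map_le_iff_le_comap.mpr ?_
  have := Ideal.isMaximal_comap_of_isIntegral_of_isMaximal (R := R) M
  exact (IsLocalRing.eq_maximalIdeal this).ge

theorem Ideal.Quotient.mk_mem_map_algebraMap_of_mem_sup {R S : Type*} [CommRing R] [CommRing S]
    [Algebra R S] {J : Ideal R} {I : Ideal S} {x : S} (hx : x ∈ J.map (algebraMap R S) ⊔ I) :
    Ideal.Quotient.mk I x ∈ J.map (algebraMap R (S ⧸ I)) := by
  have := Ideal.mem_map_of_mem (Ideal.Quotient.mk I) hx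
  rwa [Ideal.map_sup, Ideal.map_quotient_self, sup_bot_eq, Ideal.map_map,
    ← Ideal.Quotient.algebraMap_eq, ← IsScalarTower.algebraMap_eq] at this

section GroupAlgebra

variable {R A : Type*} [CommRing R] [AddCommGroup A]

local notation "H" => AddMonoidAlgebra R A

theorem groupAlgebraCounit_single (a : A) (r : R) :
    groupAlgebraCounit R A (AddMonoidAlgebra.single a r) = r := by
  rw [groupAlgebraCounit, AddMonoidAlgebra.coeff_single, Finsupp.sum_single_index rfl]

theorem groupAlgebraCounit_add (x y : H) :
    groupAlgebraCounit R A (x + y) = groupAlgebraCounit R A x + groupAlgebraCounit R A y := by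
  rw [groupAlgebraCounit, AddMonoidAlgebra.coeff_add,
    Finsupp.sum_add_index' (fun _ => rfl) fun _ _ _ => rfl]
  rfl

theorem groupAlgebraComul_single (a : A) (r : R) :
    groupAlgebraComul R A (AddMonoidAlgebra.single a r)
      = r • (AddMonoidAlgebra.single a 1 ⊗ₜ[R] AddMonoidAlgebra.single a 1) := by
  rw [groupAlgebraComul, AddMonoidAlgebra.coeff_single,
    Finsupp.sum_single_index (by rw [zero_smul])]

theorem groupAlgebraComul_add (x y : H) :
    groupAlgebraComul R A (x + y) = groupAlgebraComul R A x + groupAlgebraComul R A y := by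
  rw [groupAlgebraComul, AddMonoidAlgebra.coeff_add,
    Finsupp.sum_add_index' (fun _ => by rw [zero_smul]) fun _ _ _ => by rw [add_smul]]
  rfl

variable (R A) in
noncomputable def groupAlgebraAdamsOp (n : ℕ) : H →ₗ[R] H :=
  AddMonoidAlgebra.mapDomainLinearMap R R (n • ·)

theorem groupAlgebraAdamsOp_single (n : ℕ) (a : A) (r : R) :
    groupAlgebraAdamsOp R A n (AddMonoidAlgebra.single a r) = AddMonoidAlgebra.single (n • a) r :=
  AddMonoidAlgebra.mapDomainLinearMap_single _ _ _

theorem groupAlgebraAdamsOp_of_nsmul_eq_zero {n : ℕ} (hn : ∀ a : A, n • a = 0) (x : H) :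
    groupAlgebraAdamsOp R A n x = algebraMap R H (groupAlgebraCounit R A x) := by
  induction x using AddMonoidAlgebra.induction_linear with
  | zero => simp [groupAlgebraCounit]
  | add x y hx hy => rw [map_add, hx, hy, groupAlgebraCounit_add, map_add]
  | single a r =>
    rw [groupAlgebraAdamsOp_single, hn, groupAlgebraCounit_single, AddMonoidAlgebra.coe_algebraMap,
      Function.comp_apply, Algebra.algebraMap_self_apply]

theorem groupAlgebraAdamsOp_zero (x : H) :
    groupAlgebraAdamsOp R A 0 x = algebraMap R H (groupAlgebraCounit R A x) :=
  groupAlgebraAdamsOp_of_nsmul_eq_zero zero_nsmul x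

theorem groupAlgebraAdamsOp_succ (n : ℕ) (x : H) :
    groupAlgebraAdamsOp R A (n + 1) x
      = LinearMap.mul' R H (TensorProduct.map (groupAlgebraAdamsOp R A n) LinearMap.id
          (groupAlgebraComul R A x)) := by
  induction x using AddMonoidAlgebra.induction_linear with
  | zero => simp [groupAlgebraComul]
  | add x y hx hy => rw [map_add, hx, hy, groupAlgebraComul_add, map_add, map_add]
  | single a r =>
    rw [groupAlgebraAdamsOp_single, groupAlgebraComul_single, map_smul, TensorProduct.map_tmul,
      groupAlgebraAdamsOp_single, map_smul, LinearMap.mul'_apply, LinearMap.id_coe, id_eq,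
      AddMonoidAlgebra.single_mul_single, one_mul, AddMonoidAlgebra.smul_single', mul_one,
      succ_nsmul]

variable (I : Ideal (AddMonoidAlgebra R A))

local notation "M" => groupAlgebraMixedTensor R A I

theorem mul'_map_mem_of_mem_groupAlgebraMixedTensor {f : H →ₗ[R] H} (hf : ∀ x ∈ I, f x ∈ I)
    {t : H ⊗[R] H} (ht : t ∈ M) : LinearMap.mul' R H (TensorProduct.map f LinearMap.id t) ∈ I := by
  induction ht using Submodule.span_induction with
  | mem x hx =>
    rcases hx with ⟨a, ha, b, rfl⟩ | ⟨a, b, hb, rfl⟩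
    · rw [TensorProduct.map_tmul, LinearMap.mul'_apply]
      exact I.mul_mem_right _ (hf a ha)
    · rw [TensorProduct.map_tmul, LinearMap.mul'_apply]
      exact I.mul_mem_left _ hb
  | zero => rw [map_zero, map_zero]; exact zero_mem _
  | add u v _ _ hu hv => rw [map_add, map_add]; exact add_mem hu hv
  | smul r u _ hu => rw [map_smul, map_smul]; exact Submodule.smul_of_tower_mem I r hu

variable {I}

theorem groupAlgebraAdamsOp_mem (hcounit : ∀ x ∈ I, groupAlgebraCounit R A x = 0)
    (hcomul : ∀ x ∈ I, groupAlgebraComul R A x ∈ M) (n : ℕ) {x : H} (hx : x ∈ I) :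
    groupAlgebraAdamsOp R A n x ∈ I := by
  induction n generalizing x with
  | zero =>
    rw [groupAlgebraAdamsOp_zero, hcounit x hx, map_zero]
    exact zero_mem _
  | succ n ih =>
    rw [groupAlgebraAdamsOp_succ]
    exact mul'_map_mem_of_mem_groupAlgebraMixedTensor I (fun _ => ih) (hcomul x hx)

theorem pow_sub_groupAlgebraAdamsOp_mem (hcounit : ∀ x ∈ I, groupAlgebraCounit R A x = 0)
    (hcomul : ∀ x ∈ I, groupAlgebraComul R A x ∈ M) {z : H} (hz1 : groupAlgebraCounit R A z = 1)
    (hz : groupAlgebraComul R A z - z ⊗ₜ[R] z ∈ M) (n : ℕ) :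
    z ^ n - groupAlgebraAdamsOp R A n z ∈ I := by
  induction n with
  | zero =>
    rw [pow_zero, groupAlgebraAdamsOp_zero, hz1, map_one, sub_self]
    exact zero_mem _
  | succ n ih =>
    have hstep := mul'_map_mem_of_mem_groupAlgebraMixedTensor I
      (fun _ => groupAlgebraAdamsOp_mem hcounit hcomul n) hz
    rw [map_sub, map_sub, TensorProduct.map_tmul, LinearMap.mul'_apply, LinearMap.id_coe, id_eq,
      ← groupAlgebraAdamsOp_succ] at hstep
    have e : z ^ (n + 1) - groupAlgebraAdamsOp R A (n + 1) z
        = (z ^ n - groupAlgebraAdamsOp R A n z) * z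
          - (groupAlgebraAdamsOp R A (n + 1) z - groupAlgebraAdamsOp R A n z * z) := by
      ring
    rw [e]
    exact sub_mem (I.mul_mem_right z ih) hstep

theorem mk_pow_card_eq_one_of_groupLike [Fintype A]
    (hcounit : ∀ x ∈ I, groupAlgebraCounit R A x = 0)
    (hcomul : ∀ x ∈ I, groupAlgebraComul R A x ∈ M) {z : H} (hz1 : groupAlgebraCounit R A z = 1)
    (hz : groupAlgebraComul R A z - z ⊗ₜ[R] z ∈ M) :
    Ideal.Quotient.mk I z ^ Fintype.card A = 1 := by
  have h := pow_sub_groupAlgebraAdamsOp_mem hcounit hcomul hz1 hz (Fintype.card A)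
  rw [groupAlgebraAdamsOp_of_nsmul_eq_zero (fun _ => card_nsmul_eq_zero), hz1, map_one] at h
  rwa [← map_pow, ← map_one (Ideal.Quotient.mk I), Ideal.Quotient.eq]

end GroupAlgebra

theorem stacky_covers_grouplike_reduction_injective_general (R A : Type*) [CommRing R] [IsLocalRing R]
    [AddCommGroup A] [Fintype A] (hd : IsUnit ((Fintype.card A : R)))
    (I : Ideal (AddMonoidAlgebra R A))
    (hcounit : ∀ x ∈ I, groupAlgebraCounit R A x = 0)
    (hcomul : ∀ x ∈ I, groupAlgebraComul R A x ∈ groupAlgebraMixedTensor R A I)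
    (g g' : AddMonoidAlgebra R A)
    (hg1 : groupAlgebraCounit R A g = 1) (hg'1 : groupAlgebraCounit R A g' = 1)
    (hggl : groupAlgebraComul R A g - g ⊗ₜ[R] g ∈ groupAlgebraMixedTensor R A I)
    (hg'gl : groupAlgebraComul R A g' - g' ⊗ₜ[R] g' ∈ groupAlgebraMixedTensor R A I)
    (hgm : g - g' ∈
      Ideal.map (algebraMap R (AddMonoidAlgebra R A)) (IsLocalRing.maximalIdeal R) + I) :
    g - g' ∈ I := by
  have hd' : IsUnit (Fintype.card A : AddMonoidAlgebra R A ⧸ I) := by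
    simpa using hd.map (algebraMap R _)
  rw [← Ideal.Quotient.eq]
  refine eq_of_pow_eq_one_of_sub_mem_jacobson hd'
    (mk_pow_card_eq_one_of_groupLike hcounit hcomul hg1 hggl)
    (mk_pow_card_eq_one_of_groupLike hcounit hcomul hg'1 hg'gl) ?_
  rw [← map_sub]
  exact IsLocalRing.map_maximalIdeal_le_jacobson_bot R _
    (Ideal.Quotient.mk_mem_map_algebraMap_of_mem_sup hgm)

/-- Let `(R, m)` be a local ring and `A` a finite abelian group whose order is invertible in
`R`, and let `I ⊆ R[A]` be a Hopf ideal.  If `g, g'` are group-like modulo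
`I ⊗ R[A] + R[A] ⊗ I` and `g − g' ∈ m·R[A] + I`, then `g − g' ∈ I`: reduction modulo the
maximal ideal is injective on group-like elements of `R[A]/I`. -/
theorem stacky_covers_grouplike_reduction_injective (R A : Type*) [CommRing R] [IsLocalRing R]
    [AddCommGroup A] [Fintype A] (hd : IsUnit ((Fintype.card A : R)))
    (I : Ideal (AddMonoidAlgebra R A))
    (hcounit : ∀ x ∈ I, groupAlgebraCounit R A x = 0)
    (hantipode : ∀ x ∈ I, groupAlgebraAntipode R A x ∈ I)
    (hcomul : ∀ x ∈ I, groupAlgebraComul R A x ∈ groupAlgebraMixedTensor R A I)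
    (g g' : AddMonoidAlgebra R A)
    (hg1 : groupAlgebraCounit R A g = 1) (hg'1 : groupAlgebraCounit R A g' = 1)
    (hggl : groupAlgebraComul R A g - g ⊗ₜ[R] g ∈ groupAlgebraMixedTensor R A I)
    (hg'gl : groupAlgebraComul R A g' - g' ⊗ₜ[R] g' ∈ groupAlgebraMixedTensor R A I)
    (hgm : g - g' ∈
      Ideal.map (algebraMap R (AddMonoidAlgebra R A)) (IsLocalRing.maximalIdeal R) + I) :
    g - g' ∈ I :=
  stacky_covers_grouplike_reduction_injective_general R A hd I hcounit hcomul g g' hg1 hg'1 hggl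
    hg'gl hgm
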